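/- Affine equivariance of the depth weighted scatter matrix: if the depth function D is affine invariant, then for every nonsingular d×d matrix A and every b ∈ ℝ^d, S(F_{AX+b}) = A·S(F)·A', provided the defining integrals exist and the weighted-mass integrals are positive for both F and F_{AX+b}. -/

import Mathlib

open MeasureTheory ProbabilityTheory Matrix Filter Topology Set ENNReal NNReal

noncomputable section

namespace DWS

/-- ℝ^d with the Euclidean norm. -/
abbrev Vec (d : ℕ) := EuclideanSpace ℝ (Fin d)

/-- d × d real matrices. -/
abbrev Mat (d : ℕ) := Matrix (Fin d) (Fin d) ℝ

variable {d : ℕ}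

/-- The Euclidean inner product `u'x`. -/
def ip (u x : Vec d) : ℝ := inner ℝ u x

/-- Median of a distribution on ℝ : `Med(G) = inf {t : G(-∞,t] ≥ 1/2}`. -/
def med (G : Measure ℝ) : ℝ := sInf {t : ℝ | (1 : ℝ≥0∞) / 2 ≤ G (Set.Iic t)}

/-- Median absolute deviation. -/
def mad (G : Measure ℝ) : ℝ := med (G.map fun w => |w - med G|)

/-- Law of `u'X` for `X ~ F`. -/
def proj (F : Measure (Vec d)) (u : Vec d) : Measure ℝ := F.map fun x => (ip u x)

/-- The unit sphere of ℝ^d, as a type. -/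
def sph (d : ℕ) := {u : Vec d // ‖u‖ = 1}

/-- Generalized (μ,σ)-outlyingness. -/
def outlyG (μl σl : Measure ℝ → ℝ) (F : Measure (Vec d)) (x : Vec d) : ℝ :=
  ⨆ u : sph d, ((ip u.1 x) - μl (proj F u.1)) / σl (proj F u.1)

/-- Generalized projection depth based on location `μl` and scale `σl`. -/
def pdG (μl σl : Measure ℝ → ℝ) (F : Measure (Vec d)) (x : Vec d) : ℝ :=
  1 / (1 + outlyG μl σl F x)

/-- (Med, MAD)-outlyingness. -/
def outly (F : Measure (Vec d)) (x : Vec d) : ℝ := outlyG med mad F x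

/-- Projection depth with (μ, σ) = (Med, MAD). -/
def pd (F : Measure (Vec d)) (x : Vec d) : ℝ := 1 / (1 + outly F x)

/-- Depth weighted mean `L(F)`. -/
def wMean (w1 : ℝ → ℝ) (D : Vec d → Measure (Vec d) → ℝ) (F : Measure (Vec d)) : Vec d :=
  (∫ x, w1 (D x F) ∂F)⁻¹ • ∫ x, w1 (D x F) • x ∂F

/-- Depth weighted scatter matrix `S(F)` (entrywise integrals). -/
def wScatter (w1 w2 : ℝ → ℝ) (D : Vec d → Measure (Vec d) → ℝ) (F : Measure (Vec d)) : Mat d :=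
  fun i j => (∫ x, w2 (D x F) ∂F)⁻¹ *
    ∫ x, w2 (D x F) * ((x - wMean w1 D F) i * (x - wMean w1 D F) j) ∂F

/-- Projection depth weighted mean. -/
def PWM (w1 : ℝ → ℝ) (F : Measure (Vec d)) : Vec d := wMean w1 (fun x G => pd G x) F

/-- Projection depth weighted scatter matrix. -/
def PWS (w1 w2 : ℝ → ℝ) (F : Measure (Vec d)) : Mat d :=
  wScatter w1 w2 (fun x G => pd G x) F

/-- Outer product `v w'` as a matrix. -/
def outerM (v w : Vec d) : Mat d := fun i j => v i * w j

/-- Apply a matrix to a Euclidean vector. -/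
def mApp (A : Mat d) (x : Vec d) : Vec d := WithLp.toLp 2 (A.mulVec x : Fin d → ℝ)

/-- Frobenius norm of a matrix. -/
def mnorm (M : Mat d) : ℝ := Real.sqrt (∑ i, ∑ j, (M i j) ^ 2)

/-- Spectral (operator) norm of a matrix. -/
def specNorm (M : Mat d) : ℝ :=
  ‖LinearMap.toContinuousLinearMap (Matrix.toEuclideanLin M)‖

/-- Quadratic form `u'Au`. -/
def qf (A : Mat d) (u : Vec d) : ℝ := ∑ i, ∑ j, u i * A i j * u j

/-- Middle value (median) of three reals. -/
def mid3 (a b c : ℝ) : ℝ := max (min a b) (min (max a b) c)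

/-- `j`-th coordinate of a vector (junk value 0 out of range). -/
def coord (x : Vec d) (j : ℕ) : ℝ := if h : j < d then x ⟨j, h⟩ else 0

/-- The contaminated distribution `(1-ε)F + εG`. -/
def contam (F : Measure (Vec d)) (ε : ℝ) (G : Measure (Vec d)) : Measure (Vec d) :=
  ENNReal.ofReal (1 - ε) • F + ENNReal.ofReal ε • G

/-- One-dimensional point-mass contamination `(1-ε)G + εδ_t`. -/
def contam1 (G : Measure ℝ) (ε : ℝ) (t : ℝ) : Measure ℝ :=
  ENNReal.ofReal (1 - ε) • G + ENNReal.ofReal ε • Measure.dirac t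

/-- Empirical measure of the first `n` observations. -/
def empMeas {Ω : Type*} (X : ℕ → Ω → Vec d) (n : ℕ) (ω : Ω) : Measure (Vec d) :=
  (n : ℝ≥0∞)⁻¹ • ∑ i ∈ Finset.range n, Measure.dirac (X i ω)

/-- `X_0, X_1, …` is an i.i.d. sample from `F`. -/
def IsIIDFrom {Ω : Type*} [MeasurableSpace Ω] (P : Measure Ω) (X : ℕ → Ω → Vec d)
    (F : Measure (Vec d)) : Prop :=
  (∀ i, Measurable (X i)) ∧ iIndepFun X P ∧ ∀ i, P.map (X i) = F

/-- `R_n = O_p(a_n)`. -/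
def IsOp {Ω : Type*} [MeasurableSpace Ω] (P : Measure Ω) (R : ℕ → Ω → ℝ) (a : ℕ → ℝ) : Prop :=
  ∀ δ : ℝ, 0 < δ → ∃ M : ℝ,
    Filter.limsup (fun n => P {ω | M * a n < |R n ω|}) Filter.atTop < ENNReal.ofReal δ

/-- `R_n = o_p(a_n)`. -/
def IsLittleOp {Ω : Type*} [MeasurableSpace Ω] (P : Measure Ω) (R : ℕ → Ω → ℝ) (a : ℕ → ℝ) :
    Prop :=
  ∀ η : ℝ, 0 < η → Tendsto (fun n => P {ω | η * a n < |R n ω|}) atTop (𝓝 0)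

/-- Convergence in distribution (weak convergence of the laws). -/
def TendstoInDist {Ω E : Type*} [MeasurableSpace Ω] [MeasurableSpace E] [TopologicalSpace E]
    (P : Measure Ω) (V : ℕ → Ω → E) (μ : Measure E) : Prop :=
  ∀ f : BoundedContinuousFunction E ℝ,
    Tendsto (fun n => ∫ ω, f (V n ω) ∂P) atTop (𝓝 (∫ x, f x ∂μ))

/-- `μ` is the centered Gaussian distribution with covariance matrix `V`
(characterized through its one-dimensional projections). -/
def IsCenteredGaussian {ι : Type*} [Fintype ι] (μ : Measure (EuclideanSpace ℝ ι))
    (V : Matrix ι ι ℝ) : Prop :=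
  IsProbabilityMeasure μ ∧
    ∀ a : EuclideanSpace ℝ ι,
      μ.map (fun x => (inner ℝ a x : ℝ)) =
        gaussianReal 0 (Real.toNNReal (∑ i, ∑ j, a i * V i j * a j))

/-- Column-stacking `vec` operator (indexed by pairs). -/
def vecm (M : Mat d) : EuclideanSpace ℝ (Fin d × Fin d) := WithLp.toLp 2 fun p => M p.2 p.1

/-- The `d² × d²` commutation matrix `K_{d,d}`, satisfying `K vec(A) = vec(Aᵀ)`. -/
def commMat (d : ℕ) : Matrix (Fin d × Fin d) (Fin d × Fin d) ℝ :=
  fun p q => if p.1 = q.2 ∧ p.2 = q.1 then 1 else 0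

/-- Kronecker product `A ⊗ B` indexed by pairs. -/
def kron (A B : Mat d) : Matrix (Fin d × Fin d) (Fin d × Fin d) ℝ :=
  fun p q => A p.1 q.1 * B p.2 q.2

/-- The law of the standardized vector `Z = Σ^{-1/2}(X - θ)`; `Rsq` stands for `Σ^{1/2}`. -/
def stdLaw (F : Measure (Vec d)) (θ : Vec d) (Rsq : Mat d) : Measure (Vec d) :=
  F.map fun x => mApp Rsq⁻¹ (x - θ)

/-- `s_0(x) = 1/(1 + x/m₀)`. -/
def s0 (m0 x : ℝ) : ℝ := 1 / (1 + x / m0)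

/-- `s_i(x) = E(U₁^{2(i-1)} sign(|U₁|x - m₀))`, `U₁` the first coordinate of `Z/‖Z‖`. -/
def sfun (F0 : Measure (Vec d)) (m0 : ℝ) (i : ℕ) (x : ℝ) : ℝ :=
  ∫ z, (coord z 0 / ‖z‖) ^ (2 * (i - 1)) * Real.sign (|coord z 0 / ‖z‖| * x - m0) ∂F0

/-- `c₀ = E w₂(s₀(‖Z‖))`. -/
def c0v (F0 : Measure (Vec d)) (w2 : ℝ → ℝ) (m0 : ℝ) : ℝ := ∫ z, w2 (s0 m0 ‖z‖) ∂F0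

/-- `c₁ = E(‖Z‖² w₂(s₀(‖Z‖)))/(d c₀)`. -/
def c1v (F0 : Measure (Vec d)) (w2 : ℝ → ℝ) (m0 : ℝ) (d' : ℕ) : ℝ :=
  (∫ z, ‖z‖ ^ 2 * w2 (s0 m0 ‖z‖) ∂F0) / (d' * c0v F0 w2 m0)

/-- `c_j = E(‖Z‖^{2j-3} s₀²(‖Z‖) w₂'(s₀(‖Z‖)))/(4 m₀² p(m₀))` for `j = 2, 3`. -/
def cjv (F0 : Measure (Vec d)) (w2' : ℝ → ℝ) (m0 pm0 : ℝ) (j : ℕ) : ℝ :=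
  (∫ z, ‖z‖ ^ (2 * j - 3) * (s0 m0 ‖z‖) ^ 2 * w2' (s0 m0 ‖z‖) ∂F0) / (4 * m0 ^ 2 * pm0)

/-- `(s₁(x) - s₂(x))/(d-1)`, interpreted as 0 when `d = 1`. -/
def qterm (d' : ℕ) (F0 : Measure (Vec d)) (m0 x : ℝ) : ℝ :=
  if d' = 1 then 0 else (sfun F0 m0 1 x - sfun F0 m0 2 x) / ((d' : ℝ) - 1)

/-- `t₁(x) = c₃(s₂(x) - (s₁(x)-s₂(x))/(d-1)) + x² w₂(s₀(x))`. -/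
def t1v (d' : ℕ) (F0 : Measure (Vec d)) (w2 w2' : ℝ → ℝ) (m0 pm0 x : ℝ) : ℝ :=
  cjv F0 w2' m0 pm0 3 * (sfun F0 m0 2 x - qterm d' F0 m0 x) + x ^ 2 * w2 (s0 m0 x)

/-- `t₂(x) = c₃(s₁(x)-s₂(x))/(d-1) - c₁c₂s₁(x) - c₁w₂(s₀(x))`. -/
def t2v (d' : ℕ) (F0 : Measure (Vec d)) (w2 w2' : ℝ → ℝ) (m0 pm0 x : ℝ) : ℝ :=
  cjv F0 w2' m0 pm0 3 * qterm d' F0 m0 x - c1v F0 w2 m0 d' * cjv F0 w2' m0 pm0 2 * sfun F0 m0 1 x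
    - c1v F0 w2 m0 d' * w2 (s0 m0 x)


/-- Affine equivariance of the depth weighted scatter matrix. -/
theorem affine_equivariance_depth_weighted_scatter {d : ℕ}
    (F : Measure (Vec d)) [IsProbabilityMeasure F]
    (D : Vec d → Measure (Vec d) → ℝ)
    (hD01 : ∀ (x : Vec d) (G : Measure (Vec d)), D x G ∈ Set.Icc (0:ℝ) 1)
    (hDcont : ∀ G : Measure (Vec d), Continuous fun x => D x G)
    (hinv : ∀ A : Mat d, IsUnit A.det → ∀ b x : Vec d,
      D (mApp A x + b) (F.map fun z => mApp A z + b) = D x F)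
    (w1 w2 : ℝ → ℝ)
    (hpos1 : 0 < ∫ x, w1 (D x F) ∂F) (hpos2 : 0 < ∫ x, w2 (D x F) ∂F)
    (hint1 : Integrable (fun x => ‖x‖ * w1 (D x F)) F)
    (hint2 : Integrable (fun x => ‖x‖ ^ 2 * w2 (D x F)) F) :
    ∀ A : Mat d, IsUnit A.det → ∀ b : Vec d,
      0 < (∫ x, w1 (D x (F.map fun z => mApp A z + b)) ∂(F.map fun z => mApp A z + b)) →
      0 < (∫ x, w2 (D x (F.map fun z => mApp A z + b)) ∂(F.map fun z => mApp A z + b)) →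
      Integrable (fun x => ‖x‖ * w1 (D x (F.map fun z => mApp A z + b)))
        (F.map fun z => mApp A z + b) →
      Integrable (fun x => ‖x‖ ^ 2 * w2 (D x (F.map fun z => mApp A z + b)))
        (F.map fun z => mApp A z + b) →
      wScatter w1 w2 D (F.map fun z => mApp A z + b) = A * wScatter w1 w2 D F * Aᵀ := by
  intro A hA b hpos1' hpos2' hint1' hint2'
  classical
  set T : Vec d → Vec d := fun z => mApp A z + b with hT
  set LA : Vec d →L[ℝ] Vec d :=
    LinearMap.toContinuousLinearMap (Matrix.toEuclideanLin A) with hLAdef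
  have hLA : ∀ x : Vec d, LA x = mApp A x := fun x => Matrix.toEuclideanLin_apply A x
  have hTmeas : Measurable T := by
    have : Continuous T := by
      have : Continuous fun z : Vec d => LA z + b := LA.continuous.add continuous_const
      exact this
    exact this.measurable
  have hTae : AEMeasurable T F := hTmeas.aemeasurable
  have hDeq : ∀ z, D (T z) (F.map T) = D z F := fun z => hinv A hA b z
  -- integrability of the weights
  have hW1 : Integrable (fun x => w1 (D x F)) F := by
    by_contra h; rw [integral_undef h] at hpos1; exact lt_irrefl 0 hpos1
  have hW2 : Integrable (fun x => w2 (D x F)) F := by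
    by_contra h; rw [integral_undef h] at hpos2; exact lt_irrefl 0 hpos2
  have hW1' : Integrable (fun x => w1 (D x (F.map T))) (F.map T) := by
    by_contra h; rw [integral_undef h] at hpos1'; exact lt_irrefl 0 hpos1'
  have hW2' : Integrable (fun x => w2 (D x (F.map T))) (F.map T) := by
    by_contra h; rw [integral_undef h] at hpos2'; exact lt_irrefl 0 hpos2'
  -- coordinate bound
  have hcoord : ∀ (x : Vec d) (i : Fin d), |x i| ≤ ‖x‖ := by
    intro x i
    rw [EuclideanSpace.norm_eq, ← Real.sqrt_sq (abs_nonneg (x i))]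
    apply Real.sqrt_le_sqrt
    rw [sq_abs]
    calc x i ^ 2 ≤ ∑ j, x j ^ 2 :=
          Finset.single_le_sum (f := fun j => x j ^ 2) (fun j _ => sq_nonneg _)
            (Finset.mem_univ i)
      _ = ∑ j, ‖x j‖ ^ 2 := by simp [Real.norm_eq_abs, sq_abs]
  -- integrability of w1 • x
  have hI1 : Integrable (fun z => w1 (D z F) • z) F := by
    refine hint1.abs.mono' (hW1.aestronglyMeasurable.smul aestronglyMeasurable_id) ?_
    refine Filter.Eventually.of_forall fun z => ?_
    rw [norm_smul, abs_mul, abs_norm, Real.norm_eq_abs, mul_comm]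
  -- the weighted mean is equivariant
  have hc1 : ∫ x, w1 (D x (F.map T)) ∂(F.map T) = ∫ z, w1 (D z F) ∂F := by
    rw [integral_map hTae hW1'.aestronglyMeasurable]
    exact integral_congr_ae (Filter.Eventually.of_forall fun z => by simp only [hDeq])
  have hmean : wMean w1 D (F.map T) = LA (wMean w1 D F) + b := by
    unfold wMean
    have hsm1 : AEStronglyMeasurable (fun x => w1 (D x (F.map T)) • x) (F.map T) :=
      hW1'.aestronglyMeasurable.smul aestronglyMeasurable_id
    rw [integral_map hTae hW1'.aestronglyMeasurable, integral_map hTae hsm1]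
    simp only [hDeq]
    have h1 : ∀ z, w1 (D z F) • T z = LA (w1 (D z F) • z) + w1 (D z F) • b := by
      intro z
      rw [_root_.map_smul]
      show w1 (D z F) • (mApp A z + b) = w1 (D z F) • LA z + w1 (D z F) • b
      rw [hLA, smul_add]
    have key : ∫ z, w1 (D z F) • T z ∂F
        = LA (∫ z, w1 (D z F) • z ∂F) + (∫ z, w1 (D z F) ∂F) • b := by
      simp only [h1]
      rw [integral_add (LA.integrable_comp hI1) (hW1.smul_const b),
          LA.integral_comp_comm hI1, integral_smul_const]
    rw [key, smul_add, smul_smul, inv_mul_cancel₀ (ne_of_gt hpos1), one_smul, _root_.map_smul]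
  -- the centered vector transforms linearly
  have hsub : ∀ z, T z - wMean w1 D (F.map T) = LA (z - wMean w1 D F) := by
    intro z
    rw [hmean, _root_.map_sub]
    show mApp A z + b - (LA (wMean w1 D F) + b) = LA z - LA (wMean w1 D F)
    rw [← hLA]
    abel
  have happ : ∀ (v : Vec d) (i : Fin d), (LA v) i = ∑ k, A i k * v k := by
    intro v i
    rw [hLA]
    show (A.mulVec v) i = ∑ k, A i k * v k
    simp [Matrix.mulVec, dotProduct]
  -- integrability of the centered products
  have hIg : ∀ k l : Fin d,
      Integrable (fun z => w2 (D z F) *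
        ((z - wMean w1 D F) k * (z - wMean w1 D F) l)) F := by
    intro k l
    set L : Vec d := wMean w1 D F
    have hdom : Integrable
        (fun z => 2 * |‖z‖ ^ 2 * w2 (D z F)| + 2 * ‖L‖ ^ 2 * |w2 (D z F)|) F :=
      (hint2.abs.const_mul 2).add (hW2.abs.const_mul _)
    have hcontk : ∀ m : Fin d, Continuous fun z : Vec d => (z - L) m := fun m =>
      (EuclideanSpace.proj m : Vec d →L[ℝ] ℝ).continuous.comp
        (continuous_id.sub continuous_const)
    refine hdom.mono'
      (hW2.aestronglyMeasurable.mul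
        (((hcontk k).mul (hcontk l)).aestronglyMeasurable)) ?_
    refine Filter.Eventually.of_forall fun z => ?_
    have h1 : |(z - L) k| ≤ ‖z - L‖ := hcoord _ _
    have h2 : |(z - L) l| ≤ ‖z - L‖ := hcoord _ _
    have h3 : ‖z - L‖ ≤ ‖z‖ + ‖L‖ := norm_sub_le _ _
    have h4 : |(z - L) k * (z - L) l| ≤ 2 * ‖z‖ ^ 2 + 2 * ‖L‖ ^ 2 := by
      rw [abs_mul]
      nlinarith [abs_nonneg ((z - L) k), abs_nonneg ((z - L) l), norm_nonneg (z - L),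
        norm_nonneg z, norm_nonneg L, sq_nonneg (‖z‖ - ‖L‖)]
    have h5 : ‖w2 (D z F) * ((z - L) k * (z - L) l)‖
        = |w2 (D z F)| * |(z - L) k * (z - L) l| := by
      rw [Real.norm_eq_abs, abs_mul]
    rw [h5]
    calc |w2 (D z F)| * |(z - L) k * (z - L) l|
        ≤ |w2 (D z F)| * (2 * ‖z‖ ^ 2 + 2 * ‖L‖ ^ 2) :=
          mul_le_mul_of_nonneg_left h4 (abs_nonneg _)
      _ = 2 * |‖z‖ ^ 2 * w2 (D z F)| + 2 * ‖L‖ ^ 2 * |w2 (D z F)| := by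
          rw [abs_mul, abs_of_nonneg (sq_nonneg ‖z‖)]; ring
  -- measurability of the scatter integrand on the image side
  have hAESM : ∀ i j : Fin d, AEStronglyMeasurable (fun x => w2 (D x (F.map T)) *
      ((x - wMean w1 D (F.map T)) i * (x - wMean w1 D (F.map T)) j)) (F.map T) := by
    intro i j
    have hcontk : ∀ m : Fin d,
        Continuous fun x : Vec d => (x - wMean w1 D (F.map T)) m := fun m =>
      (EuclideanSpace.proj m : Vec d →L[ℝ] ℝ).continuous.comp
        (continuous_id.sub continuous_const)
    exact hW2'.aestronglyMeasurable.mul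
      (((hcontk i).mul (hcontk j)).aestronglyMeasurable)
  -- the main computation, entrywise
  have hc2 : ∫ x, w2 (D x (F.map T)) ∂(F.map T) = ∫ z, w2 (D z F) ∂F := by
    rw [integral_map hTae hW2'.aestronglyMeasurable]
    exact integral_congr_ae (Filter.Eventually.of_forall fun z => by simp only [hDeq])
  ext i j
  have hbig : ∫ x, w2 (D x (F.map T)) *
        ((x - wMean w1 D (F.map T)) i * (x - wMean w1 D (F.map T)) j) ∂(F.map T)
      = ∑ k, ∑ l, A i k * A j l *
          ∫ z, w2 (D z F) * ((z - wMean w1 D F) k * (z - wMean w1 D F) l) ∂F := by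
    rw [integral_map hTae (hAESM i j)]
    have hpt : ∀ z, w2 (D (T z) (F.map T)) *
          ((T z - wMean w1 D (F.map T)) i * (T z - wMean w1 D (F.map T)) j)
        = ∑ k, ∑ l, A i k * A j l *
            (w2 (D z F) * ((z - wMean w1 D F) k * (z - wMean w1 D F) l)) := by
      intro z
      rw [hDeq z, hsub z, happ, happ, Finset.sum_mul_sum]
      rw [Finset.mul_sum]
      refine Finset.sum_congr rfl fun k _ => ?_
      rw [Finset.mul_sum]
      refine Finset.sum_congr rfl fun l _ => ?_
      ring
    rw [integral_congr_ae (Filter.Eventually.of_forall hpt)]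
    rw [integral_finset_sum _ fun k _ =>
      integrable_finset_sum _ fun l _ => (hIg k l).const_mul _]
    refine Finset.sum_congr rfl fun k _ => ?_
    rw [integral_finset_sum _ fun l _ => (hIg k l).const_mul _]
    refine Finset.sum_congr rfl fun l _ => ?_
    exact integral_const_mul _ _
  show (∫ x, w2 (D x (F.map T)) ∂(F.map T))⁻¹ *
      (∫ x, w2 (D x (F.map T)) *
        ((x - wMean w1 D (F.map T)) i * (x - wMean w1 D (F.map T)) j) ∂(F.map T))
    = (A * wScatter w1 w2 D F * Aᵀ) i j
  rw [hc2, hbig]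
  simp only [wScatter, Matrix.mul_apply, Matrix.transpose_apply, Finset.mul_sum,
    Finset.sum_mul]
  rw [Finset.sum_comm]
  refine Finset.sum_congr rfl fun l _ => ?_
  refine Finset.sum_congr rfl fun k _ => ?_
  ring

end DWS
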